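/- arXiv:math/0702120 — 2 statements merged into one kernel-verified Lean document; each statement's English description precedes it below -/
import Mathlib

section
/- (Theorem 3, representer theorem for the discretized problem) Let H be a real RKHS of functions on [0,1] with reproducing kernel k, let t_1,…,t_T ∈ [0,1], let y_i ∈ H for i = 1,…,n, let A = (a_{ij}) be an n×n real positive definite matrix, and let λ > 0. Then any minimizer (α_1,…,α_n) ∈ H^n of the objective ∑_{i=1}^n ∑_{l=1}^T (y_i(t_l) − ∑_{j=1}^n a_{ij} α_j(t_l))² + λ ∑_{i,j} a_{ij} ⟪α_i, α_j⟫_H satisfies α_i ∈ span{k(t_1,·),…,k(t_T,·)} for every i; that is, each α_i has the form α_i = ∑_{l=1}^T b^i_l k(t_l,·) with real coefficients b^i_l. -/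
open scoped RealInnerProductSpace

/-!
Perturbing `αᵢ` in a direction `w` orthogonal to `V = span {k(tₗ, ·)}` does not change the data
term, which only sees the values `αⱼ(tₗ) = ⟪k(tₗ, ·), αⱼ⟫`. The penalty changes by
`λ (2 s ⟪w, βᵢ⟫ + s² aᵢᵢ ‖w‖²)` with `βᵢ = ∑ⱼ aᵢⱼ αⱼ`, so minimality forces `⟪w, βᵢ⟫ = 0`, i.e.
`βᵢ ∈ Vᗮᗮ = V` (`V` is finite-dimensional). As `A` is invertible, `α = A⁻¹ β ∈ Vⁿ`.
-/

section MatrixInner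

variable {ι E : Type*} [Fintype ι] [NormedAddCommGroup E] [InnerProductSpace ℝ E]

def matrixInner (A : Matrix ι ι ℝ) (u v : ι → E) : ℝ :=
  ∑ i, ∑ j, A i j * ⟪u i, v j⟫

theorem matrixInner_comm {A : Matrix ι ι ℝ} (hA : A.IsSymm) (u v : ι → E) :
    matrixInner A u v = matrixInner A v u := by
  rw [matrixInner, matrixInner, Finset.sum_comm]
  refine Finset.sum_congr rfl fun i _ => Finset.sum_congr rfl fun j _ => ?_
  rw [hA.apply i j, real_inner_comm]

theorem matrixInner_add_smul_self {A : Matrix ι ι ℝ} (hA : A.IsSymm) (u v : ι → E) (s : ℝ) :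
    matrixInner A (u + s • v) (u + s • v) =
      matrixInner A u u + 2 * s * matrixInner A v u + s ^ 2 * matrixInner A v v := by
  have expand : matrixInner A (u + s • v) (u + s • v) =
      matrixInner A u u + s * matrixInner A v u + s * matrixInner A u v
        + s ^ 2 * matrixInner A v v := by
    simp only [matrixInner, Finset.mul_sum, ← Finset.sum_add_distrib]
    refine Finset.sum_congr rfl fun i _ => Finset.sum_congr rfl fun j _ => ?_
    simp only [Pi.add_apply, Pi.smul_apply, inner_add_left, inner_add_right,
      real_inner_smul_left, real_inner_smul_right]
    ring
  rw [expand, matrixInner_comm hA u v]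
  ring

theorem matrixInner_single_left [DecidableEq ι] (A : Matrix ι ι ℝ) (i : ι) (w : E) (u : ι → E) :
    matrixInner A (Pi.single i w) u = ⟪w, ∑ j, A i j • u j⟫ := by
  simp only [matrixInner, inner_sum, real_inner_smul_right]
  rw [Finset.sum_eq_single i]
  · simp
  · intro k _ hk
    simp [hk]
  · simp

end MatrixInner

theorem eq_zero_of_forall_nonneg_mul_add_mul_sq {b c : ℝ} (h : ∀ s : ℝ, 0 ≤ b * s + c * s ^ 2) :
    b = 0 := by
  have hdisc : discrim c b 0 ≤ 0 :=
    discrim_le_zero fun s => by linarith [h s, show c * s ^ 2 = c * (s * s) by ring]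
  rw [discrim] at hdisc
  nlinarith [sq_nonneg b]

theorem sum_smul_mem_of_minimizer {ι E : Type*} [Fintype ι] [DecidableEq ι]
    [NormedAddCommGroup E] [InnerProductSpace ℝ E]
    (K : Submodule ℝ E) [K.HasOrthogonalProjection] {A : Matrix ι ι ℝ} (hA : A.IsSymm)
    {lam : ℝ} (hlam : 0 < lam) (F : (ι → E) → ℝ)
    (hF : ∀ u v : ι → E, (∀ j, v j ∈ Kᗮ) → F (u + v) = F u) {α : ι → E}
    (hmin : ∀ α', F α + lam * matrixInner A α α ≤ F α' + lam * matrixInner A α' α') (i : ι) :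
    ∑ j, A i j • α j ∈ K := by
  rw [← K.orthogonal_orthogonal, Submodule.mem_orthogonal]
  intro w hw
  set e := (Pi.single i w : ι → E)
  have hperp : ∀ s : ℝ, ∀ j, (s • e) j ∈ Kᗮ := fun s j => by
    rcases eq_or_ne j i with rfl | hj
    · simpa [e] using Kᗮ.smul_mem s hw
    · simp [e, hj]
  have hquad : ∀ s : ℝ, 0 ≤ (2 * matrixInner A e α) * s + matrixInner A e e * s ^ 2 := fun s => by
    have h := hmin (α + s • e)
    rw [hF _ _ (hperp s), matrixInner_add_smul_self hA] at h
    nlinarith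
  rw [← matrixInner_single_left]
  linarith [eq_zero_of_forall_nonneg_mul_add_mul_sq hquad]

theorem Submodule.mem_of_forall_sum_smul_mem {R M ι : Type*} [CommRing R] [AddCommGroup M]
    [Module R M] [Fintype ι] [DecidableEq ι] (p : Submodule R M) {A B : Matrix ι ι R}
    (hBA : B * A = 1) {α : ι → M} (h : ∀ i, ∑ j, A i j • α j ∈ p) (i : ι) : α i ∈ p := by
  have hα : α i = ∑ j, B i j • ∑ k, A j k • α k := by
    simp only [Finset.smul_sum, smul_smul]
    rw [Finset.sum_comm]
    simp [← Finset.sum_smul, ← Matrix.mul_apply, hBA, Matrix.one_apply]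
  rw [hα]
  exact p.sum_mem fun j _ => p.smul_mem _ (h j)

theorem statement10_general {Hk : Type*}
    [NormedAddCommGroup Hk] [InnerProductSpace ℝ Hk]
    (ev : Hk → Set.Icc (0:ℝ) 1 → ℝ)
    (kfun : Set.Icc (0:ℝ) 1 → Hk)
    (hk : ∀ (t : Set.Icc (0:ℝ) 1) (f : Hk), ⟪kfun t, f⟫ = ev f t)
    (n T : ℕ) (t : Fin T → Set.Icc (0:ℝ) 1) (y : Fin n → Hk)
    (A : Matrix (Fin n) (Fin n) ℝ) (hA : A.PosDef)
    (lam : ℝ) (hlam : 0 < lam)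
    (α : Fin n → Hk)
    (hmin : ∀ α' : Fin n → Hk,
      (∑ i, ∑ l, (ev (y i) (t l) - ∑ j, A i j * ev (α j) (t l)) ^ 2)
          + lam * ∑ i, ∑ j, A i j * ⟪α i, α j⟫ ≤
        (∑ i, ∑ l, (ev (y i) (t l) - ∑ j, A i j * ev (α' j) (t l)) ^ 2)
          + lam * ∑ i, ∑ j, A i j * ⟪α' i, α' j⟫) :
    ∀ i, α i ∈ Submodule.span ℝ (Set.range fun l : Fin T => kfun (t l)) := by
  set V := Submodule.span ℝ (Set.range fun l : Fin T => kfun (t l))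
  have : FiniteDimensional ℝ V := FiniteDimensional.span_of_finite ℝ (Set.finite_range _)
  have hsymm : A.IsSymm :=
    Matrix.isSymm_conjTranspose_iff.mp (congrArg Matrix.transpose hA.isHermitian)
  obtain ⟨B, hBA⟩ := hA.isUnit.exists_left_inv
  have hev : ∀ l (u v : Hk), v ∈ Vᗮ → ev (u + v) (t l) = ev u (t l) := fun l u v hv => by
    rw [← hk, ← hk, inner_add_right,
      Submodule.inner_right_of_mem_orthogonal (Submodule.subset_span (Set.mem_range_self l)) hv,
      add_zero]
  refine V.mem_of_forall_sum_smul_mem hBA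
    (sum_smul_mem_of_minimizer V hsymm hlam
      (fun α' => ∑ i, ∑ l, (ev (y i) (t l) - ∑ j, A i j * ev (α' j) (t l)) ^ 2) ?_ hmin)
  intro u v hv
  simp only [Pi.add_apply, hev _ _ _ (hv _)]

/-- Theorem 3, representer theorem for the discretized problem:
Let `Hk` be a real RKHS of functions on `[0,1]` — a Hilbert space whose elements are
real-valued functions on `[0,1]` (realized by the evaluation map `ev`), in which every
point evaluation `f ↦ f(t) = ev f t` is continuous (and linear), with reproducing
kernel sections `kfun t = k(t,·) ∈ Hk` satisfying `⟪k(t,·), f⟫ = f(t)`.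
Let `t₁,…,t_T ∈ [0,1]`, `y₁,…,yₙ ∈ Hk`, `A = (aᵢⱼ)` an `n×n` real (symmetric)
positive definite matrix and `λ > 0`.  Then any minimizer `(α₁,…,αₙ) ∈ Hkⁿ` of
`∑ᵢ∑ₗ (yᵢ(tₗ) − ∑ⱼ aᵢⱼ αⱼ(tₗ))² + λ ∑ᵢⱼ aᵢⱼ ⟪αᵢ, αⱼ⟫`
satisfies `αᵢ ∈ span{k(t₁,·),…,k(t_T,·)}` for every `i`, i.e. each `αᵢ` is of the
form `∑ₗ bᵢₗ k(tₗ,·)` with real coefficients. -/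
theorem statement10 {Hk : Type*}
    [NormedAddCommGroup Hk] [InnerProductSpace ℝ Hk] [CompleteSpace Hk]
    (ev : Hk → Set.Icc (0:ℝ) 1 → ℝ)
    (L : Set.Icc (0:ℝ) 1 → Hk →L[ℝ] ℝ)
    (hL : ∀ (t : Set.Icc (0:ℝ) 1) (f : Hk), L t f = ev f t)
    (kfun : Set.Icc (0:ℝ) 1 → Hk)
    (hk : ∀ (t : Set.Icc (0:ℝ) 1) (f : Hk), ⟪kfun t, f⟫ = ev f t)
    (n T : ℕ) (t : Fin T → Set.Icc (0:ℝ) 1) (y : Fin n → Hk)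
    (A : Matrix (Fin n) (Fin n) ℝ) (hA : A.PosDef)
    (lam : ℝ) (hlam : 0 < lam)
    (α : Fin n → Hk)
    (hmin : ∀ α' : Fin n → Hk,
      (∑ i, ∑ l, (ev (y i) (t l) - ∑ j, A i j * ev (α j) (t l)) ^ 2)
          + lam * ∑ i, ∑ j, A i j * ⟪α i, α j⟫ ≤
        (∑ i, ∑ l, (ev (y i) (t l) - ∑ j, A i j * ev (α' j) (t l)) ^ 2)
          + lam * ∑ i, ∑ j, A i j * ⟪α' i, α' j⟫) :
    ∀ i, α i ∈ Submodule.span ℝ (Set.range fun l : Fin T => kfun (t l)) :=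
  statement10_general ev kfun hk n T t y A hA lam hlam α hmin
end

section
/- Let A be an n×n and K a T×T real symmetric positive semidefinite matrix, λ ≥ 0, and Y an n×T real matrix. If an n×T real matrix B satisfies (A^T A) B (K K^T) + λ A B K = A Y K, then B minimizes the objective f(B') = Tr((Y − A B' K)(Y − A B' K)^T) + λ Tr(A B' K B'^T) over all n×T real matrices B'. -/
/-!
Write `B' = B + D`. Since `A` and `K` are symmetric, the objective expands as
`f (B + D) = f B + 2 Tr (Dᵀ G) + Tr ((ADK)(ADK)ᵀ) + λ Tr (ADKDᵀ)` with
`G = λ ABK - A (Y - ABK) K`. The normal equation says exactly `G = 0`, and the two remaining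
quadratic terms are nonnegative because `A` and `K` are positive semidefinite.
-/

open Matrix

section

variable {m p R : Type*} [Fintype m] [Fintype p] [CommRing R]

def ridgeObjective (A : Matrix m m R) (K : Matrix p p R) (lam : R) (Y B : Matrix m p R) : R :=
  ((Y - A * B * K) * (Y - A * B * K)ᵀ).trace + lam * (A * B * K * Bᵀ).trace

/-- Half the gradient of `ridgeObjective A K lam Y` at `B` when `A` and `K` are symmetric. -/
def ridgeGradient (A : Matrix m m R) (K : Matrix p p R) (lam : R) (Y B : Matrix m p R) :
    Matrix m p R :=
  lam • (A * B * K) - A * (Y - A * B * K) * K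

lemma trace_mul_mul_mul_transpose_eq_of_symm {A : Matrix m m R} {K : Matrix p p R}
    (hA : Aᵀ = A) (hK : Kᵀ = K) (X D : Matrix m p R) :
    (A * D * K * Xᵀ).trace = (Dᵀ * (A * X * K)).trace := by
  rw [← trace_transpose]
  simp only [transpose_mul, transpose_transpose, hA, hK]
  rw [← Matrix.mul_assoc, trace_mul_comm]
  simp only [Matrix.mul_assoc]

lemma ridgeObjective_add {A : Matrix m m R} {K : Matrix p p R} (hA : Aᵀ = A) (hK : Kᵀ = K)
    (lam : R) (Y B D : Matrix m p R) :
    ridgeObjective A K lam Y (B + D) = ridgeObjective A K lam Y B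
      + 2 * (Dᵀ * ridgeGradient A K lam Y B).trace
      + ((A * D * K) * (A * D * K)ᵀ).trace + lam * (A * D * K * Dᵀ).trace := by
  have hres : Y - A * (B + D) * K = (Y - A * B * K) - A * D * K := by
    rw [Matrix.mul_add, Matrix.add_mul, sub_add_eq_sub_sub]
  unfold ridgeObjective ridgeGradient
  rw [hres]
  set E := Y - A * B * K
  have hcross : (E * (A * D * K)ᵀ).trace = (Dᵀ * (A * E * K)).trace := by
    rw [← trace_transpose, transpose_mul, transpose_transpose,
      trace_mul_mul_mul_transpose_eq_of_symm hA hK]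
  simp only [transpose_sub, transpose_add, Matrix.sub_mul, Matrix.mul_sub, Matrix.mul_add,
    Matrix.add_mul, trace_sub, trace_add, Matrix.mul_smul, trace_smul, smul_eq_mul]
  rw [hcross, trace_mul_mul_mul_transpose_eq_of_symm hA hK E D,
    trace_mul_comm (A * B * K) Dᵀ, trace_mul_mul_mul_transpose_eq_of_symm hA hK B D]
  ring

lemma ridgeGradient_eq_zero_of_normal_eq {A : Matrix m m R} {K : Matrix p p R} (hA : Aᵀ = A)
    (hK : Kᵀ = K) {lam : R} {Y B : Matrix m p R}
    (hB : Aᵀ * A * B * (K * Kᵀ) + lam • (A * B * K) = A * Y * K) :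
    ridgeGradient A K lam Y B = 0 := by
  rw [ridgeGradient, Matrix.mul_sub, Matrix.sub_mul, ← hB, hA, hK]
  simp only [Matrix.mul_assoc]
  abel

end

open scoped ComplexOrder in
lemma Matrix.PosSemidef.trace_mul_mul_mul_conjTranspose_nonneg {m p 𝕜 : Type*} [Fintype m]
    [Fintype p] [RCLike 𝕜] {A : Matrix m m 𝕜} {K : Matrix p p 𝕜} (hA : A.PosSemidef)
    (hK : K.PosSemidef) (D : Matrix m p 𝕜) : 0 ≤ (A * D * K * Dᴴ).trace := by
  classical
  open scoped MatrixOrder Matrix.Norms.L2Operator in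
  obtain ⟨C, rfl⟩ := CStarAlgebra.nonneg_iff_eq_star_mul_self.mp hA.nonneg
  have hcycle : (Cᴴ * C * D * K * Dᴴ).trace = ((C * D) * K * (C * D)ᴴ).trace := by
    calc (Cᴴ * C * D * K * Dᴴ).trace = (Cᴴ * (C * D * K * Dᴴ)).trace := by
          simp only [Matrix.mul_assoc]
      _ = (C * D * K * Dᴴ * Cᴴ).trace := trace_mul_comm _ _
      _ = ((C * D) * K * (C * D)ᴴ).trace := by simp only [conjTranspose_mul, Matrix.mul_assoc]
  rw [star_eq_conjTranspose, hcycle]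
  exact (hK.mul_mul_conjTranspose_same (C * D)).trace_nonneg

/-- Let `A` be `n×n` and `K` `T×T` real symmetric positive semidefinite,
`λ ≥ 0`, and `Y` an `n×T` real matrix.  If an `n×T` matrix `B` satisfies the normal
equation `(AᵀA) B (KKᵀ) + λ A B K = A Y K`, then `B` minimizes
`f(B') = Tr((Y − A B' K)(Y − A B' K)ᵀ) + λ Tr(A B' K B'ᵀ)` over all `n×T` real
matrices `B'`. -/
theorem statement14 {n T : ℕ}
    (A : Matrix (Fin n) (Fin n) ℝ) (hA : A.PosSemidef)
    (K : Matrix (Fin T) (Fin T) ℝ) (hK : K.PosSemidef)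
    (lam : ℝ) (hlam : 0 ≤ lam)
    (Y B : Matrix (Fin n) (Fin T) ℝ)
    (hB : Aᵀ * A * B * (K * Kᵀ) + lam • (A * B * K) = A * Y * K) :
    ∀ B' : Matrix (Fin n) (Fin T) ℝ,
      ((Y - A * B * K) * (Y - A * B * K)ᵀ).trace + lam * (A * B * K * Bᵀ).trace ≤
      ((Y - A * B' * K) * (Y - A * B' * K)ᵀ).trace + lam * (A * B' * K * B'ᵀ).trace := by
  intro B'
  obtain ⟨D, rfl⟩ : ∃ D, B' = B + D := ⟨B' - B, by abel⟩
  have hAs : Aᵀ = A := (isHermitian_iff_isSymm.mp hA.isHermitian).eq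
  have hKs : Kᵀ = K := (isHermitian_iff_isSymm.mp hK.isHermitian).eq
  have hexpand := ridgeObjective_add hAs hKs lam Y B D
  rw [ridgeGradient_eq_zero_of_normal_eq hAs hKs hB, Matrix.mul_zero, trace_zero, mul_zero,
    add_zero] at hexpand
  have hfit : 0 ≤ ((A * D * K) * (A * D * K)ᵀ).trace := by
    simpa using (posSemidef_self_mul_conjTranspose (A * D * K)).trace_nonneg
  have hpenalty : 0 ≤ (A * D * K * Dᵀ).trace := by
    simpa using hA.trace_mul_mul_mul_conjTranspose_nonneg hK D
  show ridgeObjective A K lam Y B ≤ ridgeObjective A K lam Y (B + D)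
  rw [hexpand]
  linarith [mul_nonneg hlam hpenalty]
end
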